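/- Conversely, given a point φ ∈ ℝⁿ and two linearly dependent tangent vectors ψ₁, ψ₂ ∈ T_φℝⁿ ≅ ℝⁿ (viewed as point derivations at φ), the map Φ*(f) := f(φ) + θ₁ψ₁(f) + θ₂ψ₂(f) is an ℝ-algebra homomorphism C^∞(ℝⁿ) → ℝ[θ₁,θ₂]. -/

import Mathlib

open scoped Manifold
noncomputable section
abbrev Cinf (n : ℕ) := C^(⊤:ℕ∞)⟮𝓘(ℝ, (Fin n → ℝ)), (Fin n → ℝ); 𝓘(ℝ, ℝ), ℝ⟯
abbrev Gr := ExteriorAlgebra ℝ (Fin 2 → ℝ)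
def θ₁ : Gr := ExteriorAlgebra.ι ℝ ![1, 0]
def θ₂ : Gr := ExteriorAlgebra.ι ℝ ![0, 1]

lemma diffAt {n : ℕ} (f : Cinf n) (φ : Fin n → ℝ) :
    DifferentiableAt ℝ (f : (Fin n → ℝ) → ℝ) φ :=
  ((contMDiff_iff_contDiff.mp f.contMDiff).differentiable
    (by simp)).differentiableAt

lemma th1_sq : θ₁ * θ₁ = 0 := ExteriorAlgebra.ι_sq_zero _
lemma th2_sq : θ₂ * θ₂ = 0 := ExteriorAlgebra.ι_sq_zero _
lemma th_swap : θ₂ * θ₁ = - (θ₁ * θ₂) := by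
  have h : θ₁ * θ₂ + θ₂ * θ₁ = 0 :=
    ExteriorAlgebra.ι_add_mul_swap (R := ℝ) (![1,0] : Fin 2 → ℝ) ![0,1]
  exact eq_neg_of_add_eq_zero_left (by rw [add_comm]; exact h)

/-- the candidate map -/
def Phi0 (n : ℕ) (φ ψ1 ψ2 : Fin n → ℝ) (f : Cinf n) : Gr :=
  algebraMap ℝ Gr (f φ)
    + (fderiv ℝ (f : (Fin n → ℝ) → ℝ) φ ψ1) • θ₁
    + (fderiv ℝ (f : (Fin n → ℝ) → ℝ) φ ψ2) • θ₂

lemma dep_cases {n : ℕ} {ψ1 ψ2 : Fin n → ℝ}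
    (hdep : ∃ a b : ℝ, ¬(a = 0 ∧ b = 0) ∧ a • ψ1 + b • ψ2 = 0) :
    ∃ c : ℝ, ψ2 = c • ψ1 ∨ ψ1 = c • ψ2 := by
  obtain ⟨a, b, hab, hsum⟩ := hdep
  rcases eq_or_ne a 0 with ha | ha
  · have hb : b ≠ 0 := fun hb => hab ⟨ha, hb⟩
    refine ⟨-a/b, Or.inl ?_⟩
    have h : b • ψ2 = (-a) • ψ1 := by
      have := hsum; rw [ha] at this ⊢
      simpa using this
    funext i
    have := congrFun h i
    simp only [Pi.smul_apply, smul_eq_mul] at this ⊢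
    field_simp
    linarith [this]
  · refine ⟨-b/a, Or.inr ?_⟩
    have h : a • ψ1 = (-b) • ψ2 := by
      have : a • ψ1 = -(b • ψ2) := eq_neg_iff_add_eq_zero.mpr hsum
      simpa [neg_smul] using this
    funext i
    have := congrFun h i
    simp only [Pi.smul_apply, smul_eq_mul] at this ⊢
    field_simp
    linarith [this]

lemma cross_vanish {n : ℕ} {ψ1 ψ2 : Fin n → ℝ}
    (hdep : ∃ a b : ℝ, ¬(a = 0 ∧ b = 0) ∧ a • ψ1 + b • ψ2 = 0)
    (L M : (Fin n → ℝ) →L[ℝ] ℝ) : L ψ1 * M ψ2 = L ψ2 * M ψ1 := by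
  obtain ⟨c, h | h⟩ := dep_cases hdep
  · rw [h, map_smul, map_smul]; simp [smul_eq_mul]; ring
  · rw [h, map_smul, map_smul]; simp [smul_eq_mul]; ring

/-- Converse: a point together with two linearly dependent tangent vectors defines an
algebra homomorphism into the Grassmann algebra via directional derivatives. -/
theorem stmt6 (n : ℕ) (φ ψ1 ψ2 : Fin n → ℝ)
    (hdep : ∃ a b : ℝ, ¬(a = 0 ∧ b = 0) ∧ a • ψ1 + b • ψ2 = 0) :
    ∃ Φ : Cinf n →ₐ[ℝ] Gr, ∀ f : Cinf n,
      Φ f = algebraMap ℝ Gr (f φ)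
        + (fderiv ℝ (f : (Fin n → ℝ) → ℝ) φ ψ1) • θ₁
        + (fderiv ℝ (f : (Fin n → ℝ) → ℝ) φ ψ2) • θ₂ := by
  refine ⟨{ toFun := Phi0 n φ ψ1 ψ2,
            map_one' := ?_, map_mul' := ?_, map_zero' := ?_, map_add' := ?_,
            commutes' := ?_ }, fun f => rfl⟩
  · have h1 : ((1 : Cinf n) : (Fin n → ℝ) → ℝ) = fun _ => (1:ℝ) := rfl
    simp [Phi0, h1]
  · intro f g
    have hf := diffAt f φ
    have hg := diffAt g φ
    have hco : ((f * g : Cinf n) : (Fin n → ℝ) → ℝ)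
        = fun x => (f : (Fin n → ℝ) → ℝ) x * (g : (Fin n → ℝ) → ℝ) x := rfl
    have hd : fderiv ℝ ((f * g : Cinf n) : (Fin n → ℝ) → ℝ) φ
        = f φ • fderiv ℝ (g : (Fin n → ℝ) → ℝ) φ
          + g φ • fderiv ℝ (f : (Fin n → ℝ) → ℝ) φ := by
      rw [hco]; exact fderiv_mul hf hg
    have hval : (f * g : Cinf n) φ = f φ * g φ := rfl
    set a1 := fderiv ℝ (f : (Fin n → ℝ) → ℝ) φ ψ1 with ha1
    set a2 := fderiv ℝ (f : (Fin n → ℝ) → ℝ) φ ψ2 with ha2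
    set b1 := fderiv ℝ (g : (Fin n → ℝ) → ℝ) φ ψ1 with hb1
    set b2 := fderiv ℝ (g : (Fin n → ℝ) → ℝ) φ ψ2 with hb2
    have hcr : a1 * b2 = a2 * b1 := by
      have := cross_vanish hdep (fderiv ℝ (f : (Fin n → ℝ) → ℝ) φ)
        (fderiv ℝ (g : (Fin n → ℝ) → ℝ) φ)
      simpa [← ha1, ← ha2, ← hb1, ← hb2] using this
    have h1 : fderiv ℝ ((f * g : Cinf n) : (Fin n → ℝ) → ℝ) φ ψ1
        = f φ * b1 + g φ * a1 := by rw [hd]; simp [smul_eq_mul]; rfl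
    have h2 : fderiv ℝ ((f * g : Cinf n) : (Fin n → ℝ) → ℝ) φ ψ2
        = f φ * b2 + g φ * a2 := by rw [hd]; simp [smul_eq_mul]; rfl
    show Phi0 n φ ψ1 ψ2 (f * g) = Phi0 n φ ψ1 ψ2 f * Phi0 n φ ψ1 ψ2 g
    unfold Phi0
    rw [hval, h1, h2, ← ha1, ← ha2, ← hb1, ← hb2]
    have expand :
        (algebraMap ℝ Gr (f φ) + a1 • θ₁ + a2 • θ₂)
          * (algebraMap ℝ Gr (g φ) + b1 • θ₁ + b2 • θ₂)
        = algebraMap ℝ Gr (f φ * g φ)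
          + (f φ * b1 + g φ * a1) • θ₁ + (f φ * b2 + g φ * a2) • θ₂
          + (a1 * b2) • (θ₁ * θ₂) + (a2 * b1) • (θ₂ * θ₁) := by
      simp only [map_mul, Algebra.algebraMap_eq_smul_one]
      simp only [add_mul, mul_add, smul_mul_smul_comm, smul_mul_assoc, mul_smul_comm,
        one_mul, mul_one, th1_sq, th2_sq, smul_zero, add_zero]
      module
    rw [expand, th_swap, hcr]
    simp only [smul_neg]
    abel
  · have h0 : ((0 : Cinf n) : (Fin n → ℝ) → ℝ) = fun _ => (0:ℝ) := rfl
    simp [Phi0, h0]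
  · intro f g
    have hco : ((f + g : Cinf n) : (Fin n → ℝ) → ℝ)
        = fun x => (f : (Fin n → ℝ) → ℝ) x + (g : (Fin n → ℝ) → ℝ) x := rfl
    have hd : fderiv ℝ ((f + g : Cinf n) : (Fin n → ℝ) → ℝ) φ
        = fderiv ℝ (f : (Fin n → ℝ) → ℝ) φ + fderiv ℝ (g : (Fin n → ℝ) → ℝ) φ := by
      rw [hco]; exact fderiv_add (diffAt f φ) (diffAt g φ)
    have hval : (f + g : Cinf n) φ = f φ + g φ := rfl
    show Phi0 n φ ψ1 ψ2 (f + g) = Phi0 n φ ψ1 ψ2 f + Phi0 n φ ψ1 ψ2 g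
    unfold Phi0
    rw [hval, hd]
    simp only [map_add, ContinuousLinearMap.add_apply, add_smul]
    abel
  · intro r
    have hco : ((algebraMap ℝ (Cinf n) r : Cinf n) : (Fin n → ℝ) → ℝ) = fun _ => r := rfl
    have hval : (algebraMap ℝ (Cinf n) r) φ = r := rfl
    show Phi0 n φ ψ1 ψ2 (algebraMap ℝ (Cinf n) r) = algebraMap ℝ Gr r
    unfold Phi0
    have hz : fderiv ℝ ((algebraMap ℝ (Cinf n) r : Cinf n) : (Fin n → ℝ) → ℝ) φ = 0 := by
      rw [hco]; exact fderiv_const_apply r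
    rw [hval, hz]
    simp
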